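/- Let F̃_1(z) = 1 and F̃_{n+1}(z) = z(z+1) F̃_n(z+1) - (z-1)z F̃_n(z). Then for all n ≥ 1, z·F̃_n(z) = sum_{j=0}^{n} (-1)^{n+j} LS(n,j) j! (z)^j, where LS(n,j) are the Legendre-Stirling numbers of the second kind and (z)^j is the rising factorial. -/
import Mathlib


/-- `F̃ 1 = 1`, `F̃_{n+1}(z) = z(z+1) F̃_n(z+1) - (z-1)z F̃_n(z)`. -/
def Ftilde : ℕ → ℚ → ℚ
  | 0, _ => 1
  | 1, _ => 1
  | n + 2, z => z * (z + 1) * Ftilde (n + 1) (z + 1) - (z - 1) * z * Ftilde (n + 1) z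

/-- Legendre-Stirling numbers of the second kind:
`LS(n+1,j) = LS(n,j-1) + j(j+1) LS(n,j)`, `LS(n,0) = δ_{n,0}`, `LS(n,j) = 0` for `n < j`. -/
def legendreLS : ℕ → ℕ → ℚ
  | 0, 0 => 1
  | 0, _ + 1 => 0
  | _ + 1, 0 => 0
  | n + 1, j + 1 => legendreLS n j + ((j : ℚ) + 1) * ((j : ℚ) + 2) * legendreLS n (j + 1)

lemma legendreLS_eq_zero : ∀ n j : ℕ, n < j → legendreLS n j = 0
  | 0, _ + 1, _ => by simp [legendreLS]
  | n + 1, j + 1, h => by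
      rw [legendreLS, legendreLS_eq_zero n j (by omega),
        legendreLS_eq_zero n (j + 1) (by omega)]
      ring

lemma prodShift (z : ℚ) : ∀ j : ℕ,
    z * ∏ i ∈ Finset.range j, (z + 1 + (i : ℚ)) = ∏ i ∈ Finset.range (j + 1), (z + (i : ℚ))
  | 0 => by simp
  | j + 1 => by
      rw [Finset.prod_range_succ, Finset.prod_range_succ (fun i : ℕ => z + (i : ℚ)) (j + 1),
        ← mul_assoc, prodShift z j]
      push_cast
      ring

theorem Ftilde_legendreStirling_rep (n : ℕ) (hn : 1 ≤ n) (z : ℚ) :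
    z * Ftilde n z =
      ∑ j ∈ Finset.range (n + 1),
        (-1) ^ (n + j) * legendreLS n j * (j.factorial : ℚ) *
          ∏ i ∈ Finset.range j, (z + i) := by
  induction n, hn using Nat.le_induction generalizing z with
  | base => simp [Ftilde, legendreLS, Finset.sum_range_succ]
  | succ n hn ih =>
    obtain ⟨m, rfl⟩ : ∃ m, n = m + 1 := ⟨n - 1, by omega⟩
    have key : z * Ftilde (m + 1 + 1) z
        = z * z * ((z + 1) * Ftilde (m + 1) (z + 1)) - (z - 1) * z * (z * Ftilde (m + 1) z) := by
      show z * (z * (z + 1) * Ftilde (m + 1) (z + 1) - (z - 1) * z * Ftilde (m + 1) z) = _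
      ring
    rw [key, ih (z + 1), ih z, Finset.mul_sum, Finset.mul_sum, ← Finset.sum_sub_distrib]
    have hcongr : ∑ j ∈ Finset.range (m + 1 + 1),
        (z * z * ((-1) ^ (m + 1 + j) * legendreLS (m + 1) j * (j.factorial : ℚ) *
            ∏ i ∈ Finset.range j, (z + 1 + (i : ℚ)))
          - (z - 1) * z * ((-1) ^ (m + 1 + j) * legendreLS (m + 1) j * (j.factorial : ℚ) *
            ∏ i ∈ Finset.range j, (z + (i : ℚ))))
        = ∑ j ∈ Finset.range (m + 1 + 1),
          ((-1) ^ (m + 1 + j) * legendreLS (m + 1) j * (j.factorial : ℚ) *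
              (((j : ℚ) + 1) * ∏ i ∈ Finset.range (j + 1), (z + (i : ℚ)))
            - (-1) ^ (m + 1 + j) * legendreLS (m + 1) j * (j.factorial : ℚ) *
              ((j : ℚ) * ((j : ℚ) + 1) * ∏ i ∈ Finset.range j, (z + (i : ℚ)))) := by
      refine Finset.sum_congr rfl fun j _ => ?_
      have hq := prodShift z j
      rw [Finset.prod_range_succ] at hq ⊢
      linear_combination ((-1 : ℚ) ^ (m + 1 + j) * legendreLS (m + 1) j * (j.factorial : ℚ) * z) * hq
    rw [hcongr, Finset.sum_sub_distrib]
    rw [Finset.sum_range_succ' (fun j => (-1) ^ (m + 1 + 1 + j) * legendreLS (m + 1 + 1) j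
      * ((Nat.factorial j : ℕ) : ℚ) * ∏ i ∈ Finset.range j, (z + (i : ℚ))) (m + 1 + 1)]
    have hS2 : ∑ j ∈ Finset.range (m + 1 + 1),
        (-1) ^ (m + 1 + j) * legendreLS (m + 1) j * (j.factorial : ℚ) *
          ((j : ℚ) * ((j : ℚ) + 1) * ∏ i ∈ Finset.range j, (z + (i : ℚ)))
        = ∑ j ∈ Finset.range (m + 1 + 1),
        (-1) ^ (m + 1 + (j + 1)) * legendreLS (m + 1) (j + 1) * ((Nat.factorial (j + 1) : ℕ) : ℚ) *
          (((j : ℚ) + 1) * ((j : ℚ) + 2) * ∏ i ∈ Finset.range (j + 1), (z + (i : ℚ))) := by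
      conv_lhs => rw [Finset.sum_range_succ' (fun j => (-1) ^ (m + 1 + j) * legendreLS (m + 1) j *
        (j.factorial : ℚ) * ((j : ℚ) * ((j : ℚ) + 1) * ∏ i ∈ Finset.range j, (z + (i : ℚ)))) (m + 1)]
      conv_rhs => rw [Finset.sum_range_succ]
      have hlast : legendreLS (m + 1) (m + 1 + 1) = 0 := legendreLS_eq_zero _ _ (by omega)
      rw [hlast, Finset.sum_congr rfl fun j _ => ?_]
      · push_cast
        ring
      · push_cast
        ring
    rw [hS2, ← Finset.sum_sub_distrib]
    have h0 : (-1 : ℚ) ^ (m + 1 + 1 + 0) * legendreLS (m + 1 + 1) 0 * ((Nat.factorial 0 : ℕ) : ℚ) *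
        ∏ i ∈ Finset.range 0, (z + (i : ℚ)) = 0 := by simp [legendreLS]
    rw [h0, add_zero]
    refine Finset.sum_congr rfl fun j _ => ?_
    have hrec : legendreLS (m + 1 + 1) (j + 1)
        = legendreLS (m + 1) j + ((j : ℚ) + 1) * ((j : ℚ) + 2) * legendreLS (m + 1) (j + 1) := by
      rw [legendreLS]
    have hs : (-1 : ℚ) ^ (m + 1 + 1 + (j + 1)) = (-1) ^ (m + 1 + j) := by
      rw [show m + 1 + 1 + (j + 1) = (m + 1 + j) + 2 by omega, pow_add]
      norm_num
    have hs2 : (-1 : ℚ) ^ (m + 1 + (j + 1)) = -(-1) ^ (m + 1 + j) := by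
      rw [show m + 1 + (j + 1) = (m + 1 + j) + 1 by omega, pow_succ]
      ring
    rw [hrec, hs, hs2, Nat.factorial_succ]
    push_cast
    ring
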